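/- arXiv:2003.13539 — 5 statements merged into one kernel-verified Lean document; each statement's English description precedes it below -/
import Mathlib

section
/- For every u₀ ∈ (0,1) there exists A₀ > 0 such that for all real parameters a, b, c with a > 0, 0 < b < 1, −b < c < a, ab ≥ A₀, and |c| < b·exp(−2π√(ab) − M(u₀)), the equation F_{a,b,c}(u) = 2π has a unique solution u_S in the interval (|c|/b, u₀), and this solution satisfies |c|/b < u_S < exp(−2π√(ab) + M(u₀)). In particular, u_S → 0 as ab → +∞. -/
/-!
Put `t = |c|/b` and `S = √(ab)`. On `(t, 1)` the integrand of `F` is positive and lies between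
`√(1 - x) / (√((a + b) b) (x + t))` and `1 / (S (x - t) √(1 - x))`; both bounds integrate in
closed form (substitute `y = √(1 - x)`). So `F` is continuous and strictly decreasing on `(t, 1)`,
and `S · F(u)` is `-log u` up to bounded errors once `u` is well above `t`. Since `t` is below
`exp(-2πS - M)`, this gives `F > 2π` at `u = exp(-2πS - M)` and `F < 2π` on
`[exp(-2πS + M), 1]`; for `S` large the latter interval contains `u₀`, and the intermediate value
theorem together with monotonicity gives the unique root and its location.
-/

open Real MeasureTheory intervalIntegral

/-- The Abelian integral `F_{a,b,c}(u) = ∫_u^1 (1−bx)/√(x(1−x)(a+bx)(c+bx)) dx`. -/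
noncomputable def F (a b c u : ℝ) : ℝ :=
  ∫ x in u..1, (1 - b * x) / Real.sqrt (x * (1 - x) * (a + b * x) * (c + b * x))

/-- The bound function `M(u₀) = 2·ln(1+√2)/√(1−u₀) + 2·ln 2`. -/
noncomputable def M (u₀ : ℝ) : ℝ :=
  2 * Real.log (1 + Real.sqrt 2) / Real.sqrt (1 - u₀) + 2 * Real.log 2

open Set Filter

lemma integral_eq_sub_of_hasDerivAt_of_nonneg {f f' : ℝ → ℝ} {a b : ℝ} (hab : a ≤ b)
    (hcont : ContinuousOn f (Icc a b)) (hderiv : ∀ x ∈ Ioo a b, HasDerivAt f (f' x) x)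
    (hpos : ∀ x ∈ Ioo a b, 0 ≤ f' x) : ∫ x in a..b, f' x = f b - f a :=
  integral_eq_sub_of_hasDerivAt_of_le hab hcont hderiv <|
    (intervalIntegrable_iff_integrableOn_Ioc_of_le hab).2 <|
      integrableOn_deriv_of_nonneg hcont hderiv hpos

lemma log_add_sub_log_sub {k s : ℝ} (hs : 0 ≤ s) (hk : s < k) :
    log (k + s) - log (k - s) = 2 * log (k + s) - log (k ^ 2 - s ^ 2) := by
  rw [show k ^ 2 - s ^ 2 = (k + s) * (k - s) by ring,
    log_mul (by linarith) (by linarith)]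
  ring

lemma continuousOn_log_sub_sqrt_sub_log_add_sqrt {k u : ℝ} (hk : √(1 - u) < k) :
    ContinuousOn (fun y => log (k - √(1 - y)) - log (k + √(1 - y))) (Icc u 1) := by
  have hlt : ∀ y ∈ Icc u 1, √(1 - y) < k := fun y hy =>
    (sqrt_le_sqrt (by linarith [hy.1])).trans_lt hk
  have hsqrt : ContinuousOn (fun y : ℝ => √(1 - y)) (Icc u 1) := by fun_prop
  exact ((continuousOn_const.sub hsqrt).log fun y hy => (sub_pos.2 (hlt y hy)).ne').sub
    ((continuousOn_const.add hsqrt).log fun y hy =>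
      (add_pos_of_pos_of_nonneg ((sqrt_nonneg _).trans_lt (hlt y hy)) (sqrt_nonneg _)).ne')

lemma hasDerivAt_sqrt_one_sub {x : ℝ} (hx : x < 1) :
    HasDerivAt (fun y => √(1 - y)) (-1 / (2 * √(1 - x))) x := by
  simpa using ((hasDerivAt_id x).const_sub 1).sqrt (sub_pos.2 hx).ne'

lemma hasDerivAt_log_sub_sqrt_sub_log_add_sqrt {k x : ℝ} (hx : x < 1) (hk : √(1 - x) < k) :
    HasDerivAt (fun y => log (k - √(1 - y)) - log (k + √(1 - y)))
      (k / (√(1 - x) * (k ^ 2 - 1 + x))) x := by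
  have hs : 0 < √(1 - x) := sqrt_pos.2 (by linarith)
  have hsub : 0 < k - √(1 - x) := by linarith
  have hadd : 0 < k + √(1 - x) := by linarith
  have hsqrt := hasDerivAt_sqrt_one_sub hx
  have hsub' : HasDerivAt (fun y => k - √(1 - y)) (0 - -1 / (2 * √(1 - x))) x :=
    (hasDerivAt_const x k).sub hsqrt
  have hadd' : HasDerivAt (fun y => k + √(1 - y)) (0 + -1 / (2 * √(1 - x))) x :=
    (hasDerivAt_const x k).add hsqrt
  refine ((hsub'.log hsub.ne').sub (hadd'.log hadd.ne')).congr_deriv ?_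
  rw [show k ^ 2 - 1 + x = (k - √(1 - x)) * (k + √(1 - x)) by
    nlinarith [sq_sqrt (sub_pos.2 hx).le]]
  field_simp
  ring

lemma hasDerivAt_antideriv_one_div_sub_mul_sqrt_one_sub {t x : ℝ} (htx : t < x) (hx : x < 1) :
    HasDerivAt (fun y => (log (√(1 - t) - √(1 - y)) - log (√(1 - t) + √(1 - y))) / √(1 - t))
      (1 / ((x - t) * √(1 - x))) x := by
  have hp : 0 < √(1 - t) := sqrt_pos.2 (by linarith)
  have hs : 0 < √(1 - x) := sqrt_pos.2 (by linarith)
  refine ((hasDerivAt_log_sub_sqrt_sub_log_add_sqrt hx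
    (sqrt_lt_sqrt (by linarith) (by linarith))).div_const (√(1 - t))).congr_deriv ?_
  rw [sq_sqrt (by linarith), show 1 - t - 1 + x = x - t by ring]
  field_simp

lemma intervalIntegrable_one_div_sub_mul_sqrt_one_sub {t u : ℝ} (htu : t < u) (hu : u ≤ 1) :
    IntervalIntegrable (fun x => 1 / ((x - t) * √(1 - x))) volume u 1 :=
  (intervalIntegrable_iff_integrableOn_Ioc_of_le hu).2 <| integrableOn_deriv_of_nonneg
    ((continuousOn_log_sub_sqrt_sub_log_add_sqrt
      (sqrt_lt_sqrt (by linarith) (by linarith))).div_const _)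
    (fun x hx => hasDerivAt_antideriv_one_div_sub_mul_sqrt_one_sub (htu.trans hx.1) hx.2)
    (fun x hx => by have := htu.trans hx.1; have := sqrt_nonneg (1 - x); positivity)

lemma integral_one_div_sub_mul_sqrt_one_sub {t u : ℝ} (htu : t < u) (hu : u ≤ 1) :
    ∫ x in u..1, 1 / ((x - t) * √(1 - x)) =
      (log (√(1 - t) + √(1 - u)) - log (√(1 - t) - √(1 - u))) / √(1 - t) := by
  rw [integral_eq_sub_of_hasDerivAt_of_nonneg hu
    ((continuousOn_log_sub_sqrt_sub_log_add_sqrt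
      (sqrt_lt_sqrt (by linarith) (by linarith))).div_const _)
    (fun x hx => hasDerivAt_antideriv_one_div_sub_mul_sqrt_one_sub (htu.trans hx.1) hx.2)
    (fun x hx => by have := htu.trans hx.1; have := sqrt_nonneg (1 - x); positivity)]
  simp only [sub_self, sqrt_zero, sub_zero, add_zero]
  ring

lemma integral_one_div_sub_mul_sqrt_one_sub_le {t u : ℝ} (ht : 0 ≤ t) (htu : t < u)
    (hu : u ≤ 1) :
    ∫ x in u..1, 1 / ((x - t) * √(1 - x)) ≤ (2 * log 2 - log (u - t)) / √(1 - t) := by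
  have hsp : √(1 - u) < √(1 - t) := sqrt_lt_sqrt (by linarith) (by linarith)
  have hp : √(1 - t) ≤ 1 := sqrt_le_one.2 (by linarith)
  rw [integral_one_div_sub_mul_sqrt_one_sub htu hu,
    log_add_sub_log_sub (sqrt_nonneg _) hsp, sq_sqrt (by linarith), sq_sqrt (by linarith),
    show 1 - t - (1 - u) = u - t by ring]
  have : log (√(1 - t) + √(1 - u)) ≤ log 2 :=
    log_le_log (by linarith [sqrt_nonneg (1 - u)]) (by linarith)
  gcongr

lemma hasDerivAt_antideriv_sqrt_one_sub_div_add {t x : ℝ} (htx : 0 < x + t) (hx : x < 1) :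
    HasDerivAt (fun y => √(1 + t) * (log (√(1 + t) - √(1 - y)) - log (√(1 + t) + √(1 - y)))
        + 2 * √(1 - y))
      (√(1 - x) / (x + t)) x := by
  have hs : 0 < √(1 - x) := sqrt_pos.2 (by linarith)
  refine (((hasDerivAt_log_sub_sqrt_sub_log_add_sqrt hx
    (sqrt_lt_sqrt (by linarith) (by linarith))).const_mul (√(1 + t))).add
    ((hasDerivAt_sqrt_one_sub hx).const_mul 2)).congr_deriv ?_
  rw [sq_sqrt (by linarith), ← mul_div_assoc, mul_self_sqrt (by linarith),
    show 1 + t - 1 + x = x + t by ring]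
  field_simp
  rw [sq_sqrt (by linarith)]
  ring

lemma integral_sqrt_one_sub_div_add {t u : ℝ} (htu : 0 < u + t) (hu : u ≤ 1) :
    ∫ x in u..1, √(1 - x) / (x + t) =
      √(1 + t) * (log (√(1 + t) + √(1 - u)) - log (√(1 + t) - √(1 - u))) - 2 * √(1 - u) := by
  have hcont : ContinuousOn (fun y => √(1 + t) * (log (√(1 + t) - √(1 - y))
      - log (√(1 + t) + √(1 - y))) + 2 * √(1 - y)) (Icc u 1) :=
    (continuousOn_const.mul (continuousOn_log_sub_sqrt_sub_log_add_sqrt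
      (sqrt_lt_sqrt (by linarith) (by linarith)))).add (by fun_prop)
  rw [integral_eq_sub_of_hasDerivAt_of_nonneg hu hcont
    (fun x hx => hasDerivAt_antideriv_sqrt_one_sub_div_add (by linarith [hx.1]) hx.2)
    (fun x hx => div_nonneg (sqrt_nonneg _) (by linarith [hx.1]))]
  simp only [sub_self, sqrt_zero, sub_zero, add_zero, mul_zero]
  ring

lemma neg_log_add_sub_two_le_integral_sqrt_one_sub_div_add {t u : ℝ} (ht : 0 ≤ t)
    (hu₀ : 0 ≤ u) (htu : 0 < u + t) (hu : u ≤ 1) :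
    -log (u + t) - 2 ≤ ∫ x in u..1, √(1 - x) / (x + t) := by
  have hq : 1 ≤ √(1 + t) := one_le_sqrt.2 (by linarith)
  have hs : √(1 - u) ≤ 1 := sqrt_le_one.2 (by linarith)
  have hsq : √(1 - u) < √(1 + t) := sqrt_lt_sqrt (by linarith) (by linarith)
  have hL0 : 0 ≤ log (√(1 + t) + √(1 - u)) - log (√(1 + t) - √(1 - u)) :=
    sub_nonneg.2 (log_le_log (by linarith) (by linarith [sqrt_nonneg (1 - u)]))
  have hL : -log (u + t) ≤ log (√(1 + t) + √(1 - u)) - log (√(1 + t) - √(1 - u)) := by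
    rw [log_add_sub_log_sub (sqrt_nonneg _) hsq, sq_sqrt (by linarith), sq_sqrt (by linarith),
      show 1 + t - (1 - u) = u + t by ring]
    linarith [log_nonneg (by linarith [sqrt_nonneg (1 - u)] : 1 ≤ √(1 + t) + √(1 - u))]
  rw [integral_sqrt_one_sub_div_add htu hu]
  nlinarith [mul_le_mul_of_nonneg_right hq hL0]

noncomputable def abelianIntegrand (a b c x : ℝ) : ℝ :=
  (1 - b * x) / √(x * (1 - x) * (a + b * x) * (c + b * x))

section Integrand

variable {a b c t x : ℝ}

lemma nonneg_of_abs_le_mul (hb : 0 < b) (hc : |c| ≤ b * t) : 0 ≤ t :=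
  (mul_nonneg_iff_of_pos_left hb).1 ((abs_nonneg c).trans hc)

lemma quartic_pos_of_mem_Ioo (ha : 0 ≤ a) (hb : 0 < b) (hc : |c| ≤ b * t) (hx : x ∈ Ioo t 1) :
    0 < x * (1 - x) * (a + b * x) * (c + b * x) := by
  have hx₀ : 0 < x := (nonneg_of_abs_le_mul hb hc).trans_lt hx.1
  have hcx : 0 < c + b * x := by nlinarith [neg_abs_le c, hx.1]
  have : 0 < 1 - x := sub_pos.2 hx.2
  positivity

lemma abelianIntegrand_pos (ha : 0 ≤ a) (hb : 0 < b) (hb1 : b ≤ 1) (hc : |c| ≤ b * t)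
    (hx : x ∈ Ioo t 1) : 0 < abelianIntegrand a b c x := by
  have hx₀ : 0 < x := (nonneg_of_abs_le_mul hb hc).trans_lt hx.1
  exact div_pos (by nlinarith [hx.2]) (sqrt_pos.2 (quartic_pos_of_mem_Ioo ha hb hc hx))

lemma continuousOn_abelianIntegrand (ha : 0 ≤ a) (hb : 0 < b) (hc : |c| ≤ b * t) :
    ContinuousOn (abelianIntegrand a b c) (Ioo t 1) :=
  ContinuousOn.div (by fun_prop) (by fun_prop) fun _ hx =>
    (sqrt_pos.2 (quartic_pos_of_mem_Ioo ha hb hc hx)).ne'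

lemma abelianIntegrand_le (ha : 0 < a) (hb : 0 < b) (hc : |c| ≤ b * t) (hx : x ∈ Ioo t 1) :
    abelianIntegrand a b c x ≤ 1 / √(a * b) * (1 / ((x - t) * √(1 - x))) := by
  obtain ⟨htx, hx1⟩ := hx
  have ht := nonneg_of_abs_le_mul hb hc
  have hxt : 0 < x - t := sub_pos.2 htx
  have h1x : 0 < 1 - x := sub_pos.2 hx1
  have hx₀ : 0 < x := ht.trans_lt htx
  have hcx : b * (x - t) ≤ c + b * x := by linarith [neg_abs_le c]
  have hax : a ≤ a + b * x := le_add_of_nonneg_right (by positivity)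
  have hxt' : x - t ≤ x := by linarith
  have hquartic : a * b * ((x - t) ^ 2 * (1 - x)) ≤ x * (1 - x) * (a + b * x) * (c + b * x) :=
    calc a * b * ((x - t) ^ 2 * (1 - x)) = (x - t) * (1 - x) * a * (b * (x - t)) := by ring
      _ ≤ x * (1 - x) * (a + b * x) * (c + b * x) := by gcongr
  calc abelianIntegrand a b c x ≤ 1 / √(x * (1 - x) * (a + b * x) * (c + b * x)) :=
        div_le_div_of_nonneg_right (by nlinarith) (sqrt_nonneg _)
    _ ≤ 1 / √(a * b * ((x - t) ^ 2 * (1 - x))) :=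
        one_div_le_one_div_of_le (sqrt_pos.2 (by positivity)) (sqrt_le_sqrt hquartic)
    _ = 1 / √(a * b) * (1 / ((x - t) * √(1 - x))) := by
        rw [sqrt_mul' (a * b) (y := (x - t) ^ 2 * (1 - x)) (by positivity),
          sqrt_mul' _ h1x.le, sqrt_sq hxt.le]
        field_simp

lemma le_abelianIntegrand (ha : 0 ≤ a) (hb : 0 < b) (hb1 : b ≤ 1) (hc : |c| ≤ b * t)
    (hx : x ∈ Ioo t 1) :
    1 / √((a + b) * b) * (√(1 - x) / (x + t)) ≤ abelianIntegrand a b c x := by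
  have hquartic := quartic_pos_of_mem_Ioo ha hb hc hx
  obtain ⟨htx, hx1⟩ := hx
  have ht := nonneg_of_abs_le_mul hb hc
  have hxt : 0 < x + t := by linarith
  have h1x : 0 < 1 - x := sub_pos.2 hx1
  have hx₀ : 0 < x := ht.trans_lt htx
  have hcx : c + b * x ≤ b * (x + t) := by linarith [le_abs_self c]
  have hcx₀ : 0 ≤ c + b * x := by nlinarith [neg_abs_le c]
  have hbx : b * x ≤ b := mul_le_of_le_one_right hb.le hx1.le
  have hxt' : x ≤ x + t := by linarith
  have hle : x * (1 - x) * (a + b * x) * (c + b * x) ≤ (a + b) * b * ((x + t) ^ 2 * (1 - x)) :=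
    calc x * (1 - x) * (a + b * x) * (c + b * x)
        ≤ (x + t) * (1 - x) * (a + b) * (b * (x + t)) := by gcongr
      _ = (a + b) * b * ((x + t) ^ 2 * (1 - x)) := by ring
  calc 1 / √((a + b) * b) * (√(1 - x) / (x + t))
      = (1 - x) / √((a + b) * b * ((x + t) ^ 2 * (1 - x))) := by
        rw [sqrt_mul' ((a + b) * b) (y := (x + t) ^ 2 * (1 - x)) (by positivity),
          sqrt_mul' _ h1x.le, sqrt_sq hxt.le]
        have : 0 < √(1 - x) := sqrt_pos.2 h1x
        field_simp
        rw [sq_sqrt h1x.le]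
    _ ≤ (1 - x) / √(x * (1 - x) * (a + b * x) * (c + b * x)) :=
        div_le_div_of_nonneg_left h1x.le (sqrt_pos.2 hquartic) (sqrt_le_sqrt hle)
    _ ≤ abelianIntegrand a b c x :=
        div_le_div_of_nonneg_right (by nlinarith) (sqrt_nonneg _)

lemma intervalIntegrable_abelianIntegrand (ha : 0 < a) (hb : 0 < b) (hb1 : b ≤ 1)
    (hc : |c| ≤ b * t) {u : ℝ} (htu : t < u) (hu : u ≤ 1) :
    IntervalIntegrable (abelianIntegrand a b c) volume u 1 := by
  refine ((intervalIntegrable_one_div_sub_mul_sqrt_one_sub htu hu).const_mul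
    (1 / √(a * b))).mono_fun'
    (by unfold abelianIntegrand; fun_prop : Measurable _).aestronglyMeasurable ?_
  rw [uIoc_of_le hu, ← Measure.restrict_congr_set Ioo_ae_eq_Ioc]
  refine (ae_restrict_iff' measurableSet_Ioo).2 (Eventually.of_forall fun x hx => ?_)
  have hx' : x ∈ Ioo t 1 := ⟨htu.trans hx.1, hx.2⟩
  show ‖abelianIntegrand a b c x‖ ≤ _
  rw [norm_of_nonneg (abelianIntegrand_pos ha.le hb hb1 hc hx').le]
  exact abelianIntegrand_le ha hb hc hx'

end Integrand

lemma three_mul_log_two_add_one_le_M {u₀ : ℝ} (h0 : 0 ≤ u₀) (h1 : u₀ < 1) :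
    3 * log 2 + 1 ≤ M u₀ := by
  have hs2 : (1.41 : ℝ) ≤ √2 := (le_sqrt (by norm_num) (by norm_num)).2 (by norm_num)
  have he : exp 1 ≤ (1 + √2) ^ 2 / 2 := by
    rw [le_div_iff₀ two_pos]
    nlinarith [exp_one_lt_d9]
  have hlog : 1 ≤ 2 * log (1 + √2) - log 2 :=
    calc (1 : ℝ) = log (exp 1) := (log_exp 1).symm
      _ ≤ log ((1 + √2) ^ 2 / 2) := log_le_log (exp_pos 1) he
      _ = 2 * log (1 + √2) - log 2 := by
        rw [log_div (by positivity) two_ne_zero, log_pow]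
        push_cast
        ring
  have hM : 2 * log (1 + √2) ≤ 2 * log (1 + √2) / √(1 - u₀) :=
    le_div_self (by have := log_nonneg (by linarith : (1 : ℝ) ≤ 1 + √2); positivity)
      (sqrt_pos.2 (by linarith)) (sqrt_le_one.2 (by linarith))
  unfold M
  linarith

lemma mul_exp_neg_lt_one (x : ℝ) : x * exp (-x) < 1 := by
  rw [exp_neg, ← div_eq_mul_inv, div_lt_one (exp_pos x)]
  linarith [add_one_le_exp x]

section AbelianIntegral

variable {a b c t u : ℝ}

lemma hasDerivAt_F (ha : 0 < a) (hb : 0 < b) (hb1 : b ≤ 1) (hc : |c| ≤ b * t)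
    (hu : u ∈ Ioo t 1) : HasDerivAt (F a b c) (-abelianIntegrand a b c u) u :=
  integral_hasDerivAt_left (intervalIntegrable_abelianIntegrand ha hb hb1 hc hu.1 hu.2.le)
    ((continuousOn_abelianIntegrand ha.le hb hc).stronglyMeasurableAtFilter isOpen_Ioo u hu)
    ((continuousOn_abelianIntegrand ha.le hb hc).continuousAt (Ioo_mem_nhds hu.1 hu.2))

lemma continuousOn_F (ha : 0 < a) (hb : 0 < b) (hb1 : b ≤ 1) (hc : |c| ≤ b * t) :
    ContinuousOn (F a b c) (Ioo t 1) := fun _ hu =>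
  (hasDerivAt_F ha hb hb1 hc hu).continuousAt.continuousWithinAt

lemma strictAntiOn_F (ha : 0 < a) (hb : 0 < b) (hb1 : b ≤ 1) (hc : |c| ≤ b * t) :
    StrictAntiOn (F a b c) (Ioo t 1) :=
  strictAntiOn_of_deriv_neg (convex_Ioo t 1) (continuousOn_F ha hb hb1 hc) fun u hu => by
    rw [interior_Ioo] at hu
    rw [(hasDerivAt_F ha hb hb1 hc hu).deriv, neg_lt_zero]
    exact abelianIntegrand_pos ha.le hb hb1 hc hu

lemma F_le (ha : 0 < a) (hb : 0 < b) (hb1 : b ≤ 1) (hc : |c| ≤ b * t) (htu : t < u)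
    (hu : u ≤ 1) : F a b c u ≤ (2 * log 2 - log (u - t)) / (√(a * b) * √(1 - t)) :=
  calc F a b c u ≤ ∫ x in u..1, 1 / √(a * b) * (1 / ((x - t) * √(1 - x))) :=
        integral_mono_on_of_le_Ioo hu (intervalIntegrable_abelianIntegrand ha hb hb1 hc htu hu)
          ((intervalIntegrable_one_div_sub_mul_sqrt_one_sub htu hu).const_mul _)
          fun x hx => abelianIntegrand_le ha hb hc ⟨htu.trans hx.1, hx.2⟩
    _ ≤ 1 / √(a * b) * ((2 * log 2 - log (u - t)) / √(1 - t)) := by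
        rw [intervalIntegral.integral_const_mul]
        gcongr
        exact integral_one_div_sub_mul_sqrt_one_sub_le (nonneg_of_abs_le_mul hb hc) htu hu
    _ = (2 * log 2 - log (u - t)) / (√(a * b) * √(1 - t)) := by ring

lemma le_F (ha : 0 < a) (hb : 0 < b) (hb1 : b ≤ 1) (hc : |c| ≤ b * t) (htu : t < u)
    (hu : u ≤ 1) : (-log (u + t) - 2) / √((a + b) * b) ≤ F a b c u := by
  have ht := nonneg_of_abs_le_mul hb hc
  calc (-log (u + t) - 2) / √((a + b) * b)
      ≤ 1 / √((a + b) * b) * ∫ x in u..1, √(1 - x) / (x + t) := by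
        rw [one_div_mul_eq_div]
        gcongr
        exact neg_log_add_sub_two_le_integral_sqrt_one_sub_div_add ht (by linarith)
          (by linarith) hu
    _ = ∫ x in u..1, 1 / √((a + b) * b) * (√(1 - x) / (x + t)) :=
        (intervalIntegral.integral_const_mul _ _).symm
    _ ≤ F a b c u :=
        integral_mono_on_of_le_Ioo hu
          (ContinuousOn.intervalIntegrable (continuousOn_const.mul (ContinuousOn.div
            (by fun_prop) (by fun_prop) fun x hx => by
              rw [uIcc_of_le hu] at hx; linarith [hx.1])))
          (intervalIntegrable_abelianIntegrand ha hb hb1 hc htu hu)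
          fun x hx => le_abelianIntegrand ha.le hb hb1 hc ⟨htu.trans hx.1, hx.2⟩

lemma two_pi_lt_F (ha : 0 < a) (hb : 0 < b) (hb1 : b ≤ 1) (hc : |c| ≤ b * t) {m : ℝ}
    (hm : 3 * log 2 + 1 ≤ m) (hS : 100 ≤ √(a * b)) (ht : t < exp (-2 * π * √(a * b) - m)) :
    2 * π < F a b c (exp (-2 * π * √(a * b) - m)) := by
  set S := √(a * b)
  set T := exp (-2 * π * S - m)
  have ht0 := nonneg_of_abs_le_mul hb hc
  have hm0 : 0 < m := by linarith [log_nonneg one_le_two]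
  have hT1 : T ≤ 1 := exp_le_one_iff.2 (by nlinarith [pi_pos])
  have hK : √((a + b) * b) ≤ S + 1 / S := by
    have hS2 : S ^ 2 = a * b := sq_sqrt (by positivity)
    have hsq : (S + 1 / S) ^ 2 = S ^ 2 + 2 + (1 / S) ^ 2 := by field_simp; ring
    rw [sqrt_le_left (by positivity)]
    nlinarith [sq_nonneg (1 / S)]
  have hlog : log (T + t) < log 2 + (-2 * π * S - m) := by
    rw [← log_exp (-2 * π * S - m), ← log_mul two_ne_zero (exp_pos _).ne']
    exact log_lt_log (by positivity) (by linarith)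
  have hπS : 2 * π / S < 2 * log 2 - 1 := by
    rw [div_lt_iff₀ (by positivity)]
    nlinarith [pi_lt_d2, log_two_gt_d9]
  calc 2 * π < (-log (T + t) - 2) / √((a + b) * b) := by
        rw [lt_div_iff₀ (sqrt_pos.2 (by positivity))]
        calc 2 * π * √((a + b) * b) ≤ 2 * π * (S + 1 / S) := by gcongr
          _ = 2 * π * S + 2 * π / S := by ring
          _ < -log (T + t) - 2 := by linarith
    _ ≤ F a b c T := le_F ha hb hb1 hc ht hT1

lemma F_lt_two_pi (ha : 0 < a) (hb : 0 < b) (hb1 : b ≤ 1) (hc : |c| ≤ b * t) {m : ℝ}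
    (hm : 3 * log 2 + 1 ≤ m) (ht : t < exp (-2 * π * √(a * b) - m))
    (hu : exp (-2 * π * √(a * b) + m) ≤ u) (hu1 : u ≤ 1) : F a b c u < 2 * π := by
  set S := √(a * b)
  set T := exp (-2 * π * S - m)
  set E := exp (-2 * π * S + m)
  have hS : 0 < S := sqrt_pos.2 (mul_pos ha hb)
  have ht0 := nonneg_of_abs_le_mul hb hc
  have hm0 : 0 < m := by linarith [log_nonneg one_le_two]
  have hT1 : T < 1 := exp_lt_one_iff.2 (by nlinarith [pi_pos])
  have hTE : 2 * T ≤ E := by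
    have hET : E = T * exp (2 * m) := by simp only [E, T, ← exp_add]; ring_nf
    have : 2 ≤ exp (2 * m) := by linarith [add_one_le_exp (2 * m), log_nonneg one_le_two]
    rw [hET]
    nlinarith [exp_pos (-2 * π * S - m)]
  have hlog : -2 * π * S + m - log 2 ≤ log (u - t) :=
    calc -2 * π * S + m - log 2 = log (E / 2) := by
          rw [log_div (exp_pos _).ne' two_ne_zero, log_exp]
      _ ≤ log (u - t) := log_le_log (by positivity) (by linarith)
  -- Replacing `√(1 - t)` by `1` in `F_le` costs at most `2πSt < 1`, absorbed by `m ≥ 3 log 2 + 1`.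
  have hSt : 2 * π * S * t < 1 :=
    calc 2 * π * S * t ≤ 2 * π * S * exp (-(2 * π * S)) := by
          gcongr
          exact ht.le.trans (exp_le_exp.2 (by linarith))
      _ < 1 := mul_exp_neg_lt_one _
  have hsqrt : 1 - t ≤ √(1 - t) :=
    (le_sqrt (by linarith) (by linarith)).2 (by nlinarith)
  calc F a b c u ≤ (2 * log 2 - log (u - t)) / (S * √(1 - t)) :=
        F_le ha hb hb1 hc (by linarith) hu1
    _ < 2 * π := by
        rw [div_lt_iff₀ (mul_pos hS (sqrt_pos.2 (by linarith)))]
        nlinarith [mul_le_mul_of_nonneg_left hsqrt (by positivity : 0 ≤ 2 * π * S)]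

end AbelianIntegral

/-- Proposition 1: for every `u₀ ∈ (0,1)`, for `ab` large enough and
`|c| < b·exp(−2π√(ab) − M(u₀))`, the equation `F_{a,b,c}(u) = 2π` has a
unique solution `u_S ∈ (|c|/b, u₀)`, which satisfies
`|c|/b < u_S < exp(−2π√(ab) + M(u₀))`. -/
theorem F_eq_two_pi_unique_solution :
    ∀ u₀ ∈ Set.Ioo (0 : ℝ) 1, ∃ A₀ > (0 : ℝ), ∀ a b c : ℝ,
      0 < a → 0 < b → b < 1 → -b < c → c < a → A₀ ≤ a * b →
      |c| < b * Real.exp (-2 * π * Real.sqrt (a * b) - M u₀) →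
      (∃! u : ℝ, u ∈ Set.Ioo (|c| / b) u₀ ∧ F a b c u = 2 * π) ∧
      ∀ u : ℝ, u ∈ Set.Ioo (|c| / b) u₀ → F a b c u = 2 * π →
        |c| / b < u ∧ u < Real.exp (-2 * π * Real.sqrt (a * b) + M u₀) := by
  rintro u₀ ⟨hu₀, hu₀1⟩
  have hM := three_mul_log_two_add_one_le_M hu₀.le hu₀1
  have hM0 : 0 < M u₀ := by linarith [log_nonneg one_le_two]
  have hlog := log_neg hu₀ hu₀1
  have hR : 0 < 100 + M u₀ - log u₀ := by linarith
  -- `√(ab) ≥ 100` is what `two_pi_lt_F` needs, and `√(ab) ≥ M u₀ - log u₀` puts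
  -- `exp (-2π√(ab) + M u₀)` below `u₀`.
  refine ⟨(100 + M u₀ - log u₀) ^ 2, by positivity, fun a b c ha hb hb1 _ _ hab hc => ?_⟩
  have hS : 100 + M u₀ - log u₀ ≤ √(a * b) := (le_sqrt hR.le (by positivity)).2 hab
  have hct : |c| ≤ b * (|c| / b) := (mul_div_cancel₀ _ hb.ne').ge
  have ht : |c| / b < exp (-2 * π * √(a * b) - M u₀) := (div_lt_iff₀' hb).2 hc
  have hEu₀ : exp (-2 * π * √(a * b) + M u₀) ≤ u₀ :=
    (exp_le_exp.2 (by nlinarith [pi_gt_three])).trans_eq (exp_log hu₀)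
  have hTu₀ : exp (-2 * π * √(a * b) - M u₀) < u₀ :=
    (exp_lt_exp.2 (by linarith)).trans_le hEu₀
  have hbelow : ∀ u, exp (-2 * π * √(a * b) + M u₀) ≤ u → u ≤ 1 → F a b c u < 2 * π :=
    fun u hu hu1 => F_lt_two_pi ha hb hb1.le hct hM ht hu hu1
  have hanti := strictAntiOn_F ha hb hb1.le hct
  obtain ⟨uS, huS, hFuS⟩ := intermediate_value_Ioo' hTu₀.le
    ((continuousOn_F ha hb hb1.le hct).mono (Icc_subset_Ioo ht hu₀1))
    ⟨hbelow u₀ hEu₀ hu₀1.le, two_pi_lt_F ha hb hb1.le hct hM (by linarith) ht⟩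
  have huS' : uS ∈ Ioo (|c| / b) u₀ := ⟨ht.trans huS.1, huS.2⟩
  refine ⟨⟨uS, ⟨huS', hFuS⟩, fun u ⟨hu, hFu⟩ => hanti.injOn ⟨hu.1, hu.2.trans hu₀1⟩
    ⟨huS'.1, huS'.2.trans hu₀1⟩ (hFu.trans hFuS.symm)⟩, fun u hu hFu => ⟨hu.1, ?_⟩⟩
  by_contra! hEu
  exact (hbelow u hEu (hu.2.trans hu₀1).le).ne hFu
end

section
/- For all real numbers β and u with |β| ≤ u and u < 1, one has |∫_u^1 (1/√(x(x − β)) − 1/x) dx| ≤ 2 ln(1+√2). -/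
open Real MeasureTheory intervalIntegral Set

/-! The integrand has the explicit primitive `2 log (1 + √(1 - β/x))`. For `|β| ≤ x` the quantity
`1 - β/x` lies in `[0, 2]`, so the primitive takes values in `[0, 2 log (1 + √2)]` at both
endpoints, and the integral, a difference of two such values, is bounded by that length.
The term `1/√(x(x-β))` alone is integrable up to a possible singularity at `x = β` because it is
the nonnegative derivative of `2 log (√x + √(x-β))`. -/

section
variable {β : ℝ}

theorem hasDerivAt_two_mul_log_sqrt_add_sqrt_sub {x : ℝ} (hx : 0 < x) (hxβ : β < x) :
    HasDerivAt (fun y => 2 * log (√y + √(y - β))) (1 / √(x * (x - β))) x := by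
  have hsx : 0 < √x := sqrt_pos.2 hx
  have hsxβ : 0 < √(x - β) := sqrt_pos.2 (sub_pos.2 hxβ)
  have hsum :=
    (hasDerivAt_sqrt hx.ne').add (((hasDerivAt_id' x).sub_const β).sqrt (sub_pos.2 hxβ).ne')
  refine ((hsum.log (add_pos hsx hsxβ).ne').const_mul 2).congr_deriv ?_
  rw [Pi.add_apply, sqrt_mul hx.le]
  field_simp
  ring

theorem continuousOn_two_mul_log_sqrt_add_sqrt_sub :
    ContinuousOn (fun y => 2 * log (√y + √(y - β))) (Ioi 0) :=
  continuousOn_const.mul <| ContinuousOn.log (by fun_prop) fun _ hy =>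
    (add_pos_of_pos_of_nonneg (sqrt_pos.2 hy) (sqrt_nonneg _)).ne'

variable {a b : ℝ}

theorem intervalIntegrable_one_div_sqrt_mul_sub (ha : 0 < a) (hβa : β ≤ a) (hab : a ≤ b) :
    IntervalIntegrable (fun x => 1 / √(x * (x - β))) volume a b := by
  rw [intervalIntegrable_iff_integrableOn_Ioc_of_le hab]
  exact integrableOn_deriv_of_nonneg
    (continuousOn_two_mul_log_sqrt_add_sqrt_sub.mono fun _ hx => ha.trans_le hx.1)
    (fun _ hx => hasDerivAt_two_mul_log_sqrt_add_sqrt_sub (ha.trans hx.1) (hβa.trans_lt hx.1))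
    (fun _ _ => by positivity)

theorem integral_one_div_sqrt_mul_sub (ha : 0 < a) (hβa : β ≤ a) (hab : a ≤ b) :
    ∫ x in a..b, 1 / √(x * (x - β)) =
      2 * log (√b + √(b - β)) - 2 * log (√a + √(a - β)) :=
  integral_eq_sub_of_hasDerivAt_of_le hab
    (continuousOn_two_mul_log_sqrt_add_sqrt_sub.mono fun _ hx => ha.trans_le hx.1)
    (fun _ hx => hasDerivAt_two_mul_log_sqrt_add_sqrt_sub (ha.trans hx.1) (hβa.trans_lt hx.1))
    (intervalIntegrable_one_div_sqrt_mul_sub ha hβa hab)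

end

noncomputable def regularizedPrimitive (β x : ℝ) : ℝ :=
  2 * log (√x + √(x - β)) - log x

section
variable {β x : ℝ}

theorem regularizedPrimitive_eq (hx : 0 < x) :
    regularizedPrimitive β x = 2 * (log (√x + √(x - β)) - log √x) := by
  rw [regularizedPrimitive, log_sqrt hx.le]
  ring

theorem regularizedPrimitive_nonneg (hx : 0 < x) : 0 ≤ regularizedPrimitive β x := by
  rw [regularizedPrimitive_eq hx]
  have := log_le_log (sqrt_pos.2 hx) (le_add_of_nonneg_right (sqrt_nonneg (x - β)))
  linarith

theorem regularizedPrimitive_le (hx : 0 < x) (hβ : -x ≤ β) :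
    regularizedPrimitive β x ≤ 2 * log (1 + √2) := by
  have hsx : 0 < √x := sqrt_pos.2 hx
  have hsxβ : √(x - β) ≤ √2 * √x := by
    rw [← sqrt_mul zero_le_two]
    exact sqrt_le_sqrt (by linarith)
  have hlog : log (√x + √(x - β)) ≤ log (1 + √2) + log √x := by
    rw [← log_mul (by positivity) hsx.ne']
    exact log_le_log (by positivity) (by linarith)
  rw [regularizedPrimitive_eq hx]
  linarith

end

/-- For `0 < u < 1` and `|β| ≤ u`,
`|∫_u^1 (1/√(x(x−β)) − 1/x) dx| ≤ 2·ln(1+√2)`. -/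
theorem abs_integral_regularized_sqrt_le (β u : ℝ) (hβ : |β| ≤ u) (hu0 : 0 < u)
    (hu1 : u < 1) :
    |∫ x in u..1, (1 / Real.sqrt (x * (x - β)) - 1 / x)| ≤
      2 * Real.log (1 + Real.sqrt 2) := by
  have hβu : β ≤ u := (le_abs_self β).trans hβ
  have hβ' : -u ≤ β := neg_le_of_abs_le hβ
  have hinv : IntervalIntegrable (fun x : ℝ => 1 / x) volume u 1 :=
    intervalIntegrable_one_div (fun x hx => (hu0.trans_le (uIcc_of_le hu1.le ▸ hx).1).ne')
      continuousOn_id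
  have hF : ∫ x in u..1, (1 / √(x * (x - β)) - 1 / x) =
      regularizedPrimitive β 1 - regularizedPrimitive β u := by
    rw [integral_sub (intervalIntegrable_one_div_sqrt_mul_sub hu0 hβu hu1.le) hinv,
      integral_one_div_sqrt_mul_sub hu0 hβu hu1.le, integral_one_div_of_pos hu0 one_pos,
      log_div one_ne_zero hu0.ne', regularizedPrimitive, regularizedPrimitive, log_one]
    ring
  rw [hF]
  exact abs_sub_le_of_nonneg_of_le (regularizedPrimitive_nonneg one_pos)
    (regularizedPrimitive_le one_pos (by linarith)) (regularizedPrimitive_nonneg hu0)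
    (regularizedPrimitive_le hu0 hβ')
end

section
/- There exists A₀ > 0 such that for all real a, b with a > 0, 0 < b < 1 and ab ≥ A₀, and for every u with 0 < u < 1, the quantity h₂(u) = ∫_u^1 (1/x)·((1 − bx)/√((1−x)(1 + bx/a)) − 1) dx satisfies |h₂(u)| ≤ 2 ln 2. -/
/-! Write `s = √(1 - x)` and `t = √(1 + bx/a)`, so the integrand is `((1 - bx)/(st) - 1)/x`.
Since `t ≥ 1`, it is at most `(1/s - 1)/x = 1/(s(1 + s))`, which has antiderivative
`-2 log (1 + s)`; its integral over `[u, 1]` is `2 log (1 + √(1 - u)) ≤ 2 log 2`.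
Since `t ≤ 1 + bx/(2a)`, it is at least `-(1 + 1/(2as))`, whose integral is at most `1 + 1/a`,
and `1 + 1/a ≤ 5/4 < 2 log 2` because `ab ≥ 4` and `b < 1` force `a ≥ 4`. -/

open Real MeasureTheory intervalIntegral Set

lemma intervalIntegrable_of_le_of_neg_le {f g h : ℝ → ℝ} {a b : ℝ} (hab : a ≤ b)
    (hf : AEStronglyMeasurable f (volume.restrict (Ioc a b)))
    (hg : IntervalIntegrable g volume a b) (hh : IntervalIntegrable h volume a b)
    (hfg : ∀ x ∈ Ioo a b, f x ≤ g x) (hfh : ∀ x ∈ Ioo a b, -f x ≤ h x) :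
    IntervalIntegrable f volume a b := by
  rw [intervalIntegrable_iff_integrableOn_Ioc_of_le hab] at hg hh ⊢
  have hIoo : volume.restrict (Ioo a b) = volume.restrict (Ioc a b) :=
    Measure.restrict_congr_set Ioo_ae_eq_Ioc
  refine integrable_of_le_of_le hf (g₁ := fun x => -h x) (g₂ := g) ?_ ?_ hh.neg hg
  · rw [← hIoo]
    exact ae_restrict_of_forall_mem measurableSet_Ioo fun x hx => neg_le.mp (hfh x hx)
  · rw [← hIoo]
    exact ae_restrict_of_forall_mem measurableSet_Ioo hfg

lemma intervalIntegrable_deriv_of_nonneg_of_le {f f' : ℝ → ℝ} {a b : ℝ} (hab : a ≤ b)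
    (hcont : ContinuousOn f (Icc a b)) (hderiv : ∀ x ∈ Ioo a b, HasDerivAt f (f' x) x)
    (hpos : ∀ x ∈ Ioo a b, 0 ≤ f' x) : IntervalIntegrable f' volume a b :=
  (intervalIntegrable_iff_integrableOn_Ioc_of_le hab).2
    (integrableOn_deriv_of_nonneg hcont hderiv hpos)

section OneSubSqrt

variable {u x : ℝ}

lemma hasDerivAt_neg_two_mul_sqrt_one_sub (hx : x < 1) :
    HasDerivAt (fun y => -2 * √(1 - y)) (√(1 - x))⁻¹ x := by
  have hs : 0 < √(1 - x) := sqrt_pos.mpr (by linarith)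
  refine ((((hasDerivAt_id' x).const_sub 1).sqrt (by linarith)).const_mul (-2)).congr_deriv ?_
  field_simp

lemma hasDerivAt_neg_two_mul_log_one_add_sqrt_one_sub (hx : x < 1) :
    HasDerivAt (fun y => -2 * log (1 + √(1 - y))) (√(1 - x) * (1 + √(1 - x)))⁻¹ x := by
  have hs : 0 < √(1 - x) := sqrt_pos.mpr (by linarith)
  refine (((((hasDerivAt_id' x).const_sub 1).sqrt (by linarith)).const_add 1).log
    (by positivity)).const_mul (-2) |>.congr_deriv ?_
  field_simp

lemma intervalIntegrable_inv_sqrt_one_sub (hu : u ≤ 1) :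
    IntervalIntegrable (fun x => (√(1 - x))⁻¹) volume u 1 :=
  intervalIntegrable_deriv_of_nonneg_of_le hu (by fun_prop)
    (fun _ hx => hasDerivAt_neg_two_mul_sqrt_one_sub hx.2) (fun _ _ => by positivity)

lemma integral_inv_sqrt_one_sub (hu : u ≤ 1) : ∫ x in u..1, (√(1 - x))⁻¹ = 2 * √(1 - u) := by
  rw [integral_eq_sub_of_hasDerivAt_of_le hu (by fun_prop)
    (fun _ hx => hasDerivAt_neg_two_mul_sqrt_one_sub hx.2) (intervalIntegrable_inv_sqrt_one_sub hu)]
  simp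

lemma intervalIntegrable_inv_sqrt_one_sub_mul_one_add (hu : u ≤ 1) :
    IntervalIntegrable (fun x => (√(1 - x) * (1 + √(1 - x)))⁻¹) volume u 1 :=
  intervalIntegrable_deriv_of_nonneg_of_le hu (by fun_prop (disch := intros; positivity))
    (fun _ hx => hasDerivAt_neg_two_mul_log_one_add_sqrt_one_sub hx.2) (fun _ _ => by positivity)

lemma integral_inv_sqrt_one_sub_mul_one_add (hu : u ≤ 1) :
    ∫ x in u..1, (√(1 - x) * (1 + √(1 - x)))⁻¹ = 2 * log (1 + √(1 - u)) := by
  rw [integral_eq_sub_of_hasDerivAt_of_le hu (by fun_prop (disch := intros; positivity))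
    (fun _ hx => hasDerivAt_neg_two_mul_log_one_add_sqrt_one_sub hx.2)
    (intervalIntegrable_inv_sqrt_one_sub_mul_one_add hu)]
  simp

lemma integral_one_add_mul_inv_sqrt_one_sub (c : ℝ) (hu : u ≤ 1) :
    ∫ x in u..1, (1 + c * (√(1 - x))⁻¹) = (1 - u) + 2 * c * √(1 - u) := by
  rw [integral_add intervalIntegrable_const ((intervalIntegrable_inv_sqrt_one_sub hu).const_mul c),
    intervalIntegral.integral_const_mul, integral_inv_sqrt_one_sub hu, intervalIntegral.integral_const]
  simp only [smul_eq_mul, mul_one]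
  ring

end OneSubSqrt

section Integrand

variable {a b x : ℝ}

lemma div_sqrt_le_inv_sqrt_one_sub (ha : 0 < a) (hb : 0 ≤ b) (hx : x ∈ Ioo 0 1) :
    (1 - b * x) / √((1 - x) * (1 + b * x / a)) ≤ (√(1 - x))⁻¹ := by
  obtain ⟨hx0, hx1⟩ := hx
  have hs : 0 < √(1 - x) := sqrt_pos.mpr (by linarith)
  have ht : 1 ≤ √(1 + b * x / a) := one_le_sqrt.mpr (by simp; positivity)
  rw [sqrt_mul (by linarith), div_le_iff₀ (by positivity)]
  calc 1 - b * x ≤ √(1 + b * x / a) := by nlinarith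
    _ = (√(1 - x))⁻¹ * (√(1 - x) * √(1 + b * x / a)) := by field_simp

lemma sqrt_one_sub_sub_le_div_sqrt (ha : 0 < a) (hb0 : 0 ≤ b) (hb1 : b ≤ 1) (hx : x ∈ Ioo 0 1) :
    √(1 - x) - x / (2 * a * √(1 - x)) ≤ (1 - b * x) / √((1 - x) * (1 + b * x / a)) := by
  obtain ⟨hx0, hx1⟩ := hx
  set c := x / (2 * a) with hc
  have hc0 : 0 ≤ c := by positivity
  have hs : 0 < √(1 - x) := sqrt_pos.mpr (by linarith)
  have hs2 : √(1 - x) ^ 2 = 1 - x := sq_sqrt (by linarith)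
  set t := √(1 + b * x / a)
  have ht1 : 1 ≤ t := one_le_sqrt.mpr (by simp; positivity)
  have ht2 : t ≤ 1 + b * c := by
    rw [sqrt_le_left (by positivity), hc]
    field_simp
    nlinarith [sq_nonneg (b * x)]
  have key : (1 - x - c) * t ≤ 1 - b * x := by
    rcases le_or_gt 0 (1 - x - c) with h | h <;> nlinarith
  rw [sqrt_mul (by linarith), le_div_iff₀ (by positivity)]
  calc (√(1 - x) - x / (2 * a * √(1 - x))) * (√(1 - x) * t) = (1 - x - c) * t := by
        rw [hc]; field_simp; rw [hs2]
    _ ≤ 1 - b * x := key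

lemma integrand_le_inv_sqrt_one_sub_mul_one_add (ha : 0 < a) (hb : 0 ≤ b) (hx : x ∈ Ioo 0 1) :
    1 / x * ((1 - b * x) / √((1 - x) * (1 + b * x / a)) - 1) ≤ (√(1 - x) * (1 + √(1 - x)))⁻¹ := by
  have hx0 : 0 < x := hx.1
  have hs : 0 < √(1 - x) := sqrt_pos.mpr (by linarith [hx.2])
  have hs2 : √(1 - x) ^ 2 = 1 - x := sq_sqrt (by linarith [hx.2])
  calc 1 / x * ((1 - b * x) / √((1 - x) * (1 + b * x / a)) - 1)
      ≤ 1 / x * ((√(1 - x))⁻¹ - 1) := by gcongr; exact div_sqrt_le_inv_sqrt_one_sub ha hb hx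
    _ = (√(1 - x) * (1 + √(1 - x)))⁻¹ := by field_simp; linarith [hs2]

lemma neg_integrand_le_one_add (ha : 0 < a) (hb0 : 0 ≤ b) (hb1 : b ≤ 1) (hx : x ∈ Ioo 0 1) :
    -(1 / x * ((1 - b * x) / √((1 - x) * (1 + b * x / a)) - 1)) ≤
      1 + (2 * a)⁻¹ * (√(1 - x))⁻¹ := by
  have hx0 : 0 < x := hx.1
  have hs : 0 < √(1 - x) := sqrt_pos.mpr (by linarith [hx.2])
  have hs1 : 1 - x ≤ √(1 - x) := by
    have := sq_sqrt (show 0 ≤ 1 - x by linarith [hx.2])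
    nlinarith [sqrt_le_one.mpr (show 1 - x ≤ 1 by linarith)]
  calc -(1 / x * ((1 - b * x) / √((1 - x) * (1 + b * x / a)) - 1))
      = (1 - (1 - b * x) / √((1 - x) * (1 + b * x / a))) / x := by ring
    _ ≤ (1 - (√(1 - x) - x / (2 * a * √(1 - x)))) / x := by
        gcongr; exact sqrt_one_sub_sub_le_div_sqrt ha hb0 hb1 hx
    _ = (1 - √(1 - x)) / x + (2 * a)⁻¹ * (√(1 - x))⁻¹ := by field_simp; ring
    _ ≤ 1 + (2 * a)⁻¹ * (√(1 - x))⁻¹ := by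
        gcongr; rw [div_le_one hx0]; linarith

end Integrand

/-- Bound on the function `h₂`: for `ab` large enough and every `u ∈ (0,1)`,
`|∫_u^1 (1/x)·((1−bx)/√((1−x)(1+bx/a)) − 1) dx| ≤ 2·ln 2`. -/
theorem h2_bound :
    ∃ A₀ > (0 : ℝ), ∀ a b : ℝ, 0 < a → 0 < b → b < 1 → A₀ ≤ a * b →
      ∀ u : ℝ, 0 < u → u < 1 →
        |∫ x in u..1,
            (1 / x) * ((1 - b * x) / Real.sqrt ((1 - x) * (1 + b * x / a)) - 1)| ≤
          2 * Real.log 2 := by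
  refine ⟨4, by norm_num, fun a b ha hb hb1 hab u hu hu1 => ?_⟩
  have ha4 : 4 ≤ a := by nlinarith
  have hIoo : ∀ x ∈ Ioo u 1, x ∈ Ioo 0 1 := fun x hx => ⟨hu.trans hx.1, hx.2⟩
  have hle x (hx : x ∈ Ioo u 1) :=
    integrand_le_inv_sqrt_one_sub_mul_one_add ha hb.le (hIoo x hx)
  have hge x (hx : x ∈ Ioo u 1) := neg_integrand_le_one_add ha hb.le hb1.le (hIoo x hx)
  have hup := intervalIntegrable_inv_sqrt_one_sub_mul_one_add hu1.le
  have hlow : IntervalIntegrable (fun x => 1 + (2 * a)⁻¹ * (√(1 - x))⁻¹) volume u 1 :=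
    intervalIntegrable_const.add ((intervalIntegrable_inv_sqrt_one_sub hu1.le).const_mul _)
  have hf := intervalIntegrable_of_le_of_neg_le hu1.le
    (by fun_prop : Measurable _).aestronglyMeasurable hup hlow hle hge
  have hs : √(1 - u) ≤ 1 := sqrt_le_one.mpr (by linarith)
  rw [abs_le]
  constructor
  · have h := integral_mono_on_of_le_Ioo hu1.le hf.neg hlow hge
    simp only [Pi.neg_apply, intervalIntegral.integral_neg] at h
    rw [integral_one_add_mul_inv_sqrt_one_sub _ hu1.le] at h
    have : 2 * (2 * a)⁻¹ * √(1 - u) ≤ 1 / 4 := by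
      field_simp
      linarith
    linarith [log_two_gt_d9]
  · calc _ ≤ _ := integral_mono_on_of_le_Ioo hu1.le hf hup hle
      _ = 2 * log (1 + √(1 - u)) := integral_inv_sqrt_one_sub_mul_one_add hu1.le
      _ ≤ 2 * log 2 := by gcongr; linarith
end

section
/- Fix real a > 0 and 0 < b < 1. Then the Dzhanibekov precession angle Δφ(c) = ∫_{−π/2}^{π/2} (1 − b cos²ψ)/√((a + b cos²ψ)(c + b cos²ψ)) dψ tends to +∞ as c tends to 0 from the right. -/
/-!
Write `ψ = π/2 - s`. Since `cos² ψ = sin² s ≤ s²` and `cos² ψ ≤ 1`, the integrand of `Δφ(c)` is at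
least `(1 - b) / (√(a + b) (√c + √b s))`, whose integral over `0 ≤ s ≤ π` is
`(1 - b) / √(a + b) · (√b)⁻¹ · log ((√c + √b π) / √c)`; this blows up logarithmically as `c → 0⁺`.
-/

open Real MeasureTheory intervalIntegral Filter Set Topology

theorem Real.sqrt_add_le_add_sqrt (x y : ℝ) : √(x + y) ≤ √x + √y := by
  rw [sqrt_le_iff]
  refine ⟨by positivity, ?_⟩
  have hx : x ≤ √x ^ 2 := sq_sqrt' (x := x) ▸ le_max_left x 0
  have hy : y ≤ √y ^ 2 := sq_sqrt' (x := y) ▸ le_max_left y 0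
  nlinarith [mul_nonneg (sqrt_nonneg x) (sqrt_nonneg y)]

theorem Real.sqrt_add_mul_sq_le {b c s t : ℝ} (hb : 0 ≤ b) (hs : 0 ≤ s) (hts : t ^ 2 ≤ s ^ 2) :
    √(c + b * t ^ 2) ≤ √c + √b * s :=
  calc √(c + b * t ^ 2) ≤ √(c + b * s ^ 2) := by gcongr
    _ ≤ √c + √(b * s ^ 2) := sqrt_add_le_add_sqrt _ _
    _ = √c + √b * s := by rw [sqrt_mul hb, sqrt_sq hs]

theorem Real.tendsto_sqrt_nhdsGT_zero : Tendsto (√·) (𝓝[>] 0) (𝓝[>] 0) :=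
  tendsto_nhdsWithin_of_tendsto_nhds_of_eventually_within _
    (by simpa using continuous_sqrt.continuousWithinAt.tendsto (s := Ioi 0) (x := 0))
    (eventually_nhdsWithin_of_forall fun _ hx => sqrt_pos.2 hx)

theorem Real.tendsto_log_add_div_self_nhdsGT_zero {M : ℝ} (hM : 0 < M) :
    Tendsto (fun x => log ((x + M) / x)) (𝓝[>] 0) atTop := by
  refine tendsto_log_atTop.comp ?_
  simp only [div_eq_mul_inv]
  refine Tendsto.pos_mul_atTop hM ?_ tendsto_inv_nhdsGT_zero
  simpa using (continuous_add_const M).continuousWithinAt.tendsto (s := Ioi 0) (x := 0)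

theorem intervalIntegral.integral_inv_add_mul {x k L : ℝ} (hx : 0 < x) (hk : 0 < k) (hL : 0 ≤ L) :
    ∫ s in (0 : ℝ)..L, (x + k * s)⁻¹ = k⁻¹ * log ((x + k * L) / x) := by
  rw [integral_comp_add_mul (fun s => s⁻¹) hk.ne', mul_zero, add_zero,
    integral_inv_of_pos hx (by positivity), smul_eq_mul]

noncomputable def precessionIntegrand (a b c ψ : ℝ) : ℝ :=
  (1 - b * cos ψ ^ 2) / √((a + b * cos ψ ^ 2) * (c + b * cos ψ ^ 2))

section

variable {a b c : ℝ}

theorem continuous_precessionIntegrand (ha : 0 < a) (hb : 0 ≤ b) (hc : 0 < c) :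
    Continuous (precessionIntegrand a b c) := by
  refine Continuous.div (by fun_prop) (by fun_prop) fun ψ => ?_
  exact (sqrt_pos.2 (by positivity)).ne'

theorem le_precessionIntegrand (ha : 0 < a) (hb0 : 0 ≤ b) (hb1 : b ≤ 1) (hc : 0 < c) {ψ : ℝ}
    (hψ : ψ ≤ π / 2) :
    (1 - b) / √(a + b) * (√c + √b * (π / 2 - ψ))⁻¹ ≤ precessionIntegrand a b c ψ := by
  have hb_cos_sq : b * cos ψ ^ 2 ≤ b := mul_le_of_le_one_right hb0 (cos_sq_le_one ψ)
  have hcos_sq : cos ψ ^ 2 ≤ (π / 2 - ψ) ^ 2 := by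
    rw [← sin_pi_div_two_sub]
    exact sin_sq_le_sq
  have hA : 0 < a + b * cos ψ ^ 2 := by positivity
  have hC : 0 < c + b * cos ψ ^ 2 := by positivity
  rw [precessionIntegrand, sqrt_mul hA.le, ← div_eq_mul_inv, div_div]
  gcongr
  · linarith
  · exact sqrt_add_mul_sq_le hb0 (by linarith) hcos_sq

theorem log_le_integral_precessionIntegrand (ha : 0 < a) (hb0 : 0 < b) (hb1 : b ≤ 1) (hc : 0 < c) :
    (1 - b) / √(a + b) * ((√b)⁻¹ * log ((√c + √b * π) / √c)) ≤
      ∫ ψ in -(π / 2)..π / 2, precessionIntegrand a b c ψ := by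
  have hsc : 0 < √c := sqrt_pos.2 hc
  have hsb : 0 < √b := sqrt_pos.2 hb0
  have hden : ∀ ψ ∈ uIcc (-(π / 2)) (π / 2), √c + √b * (π / 2 - ψ) ≠ 0 := by
    intro ψ hψ
    rw [uIcc_of_le (by linarith [pi_pos])] at hψ
    have : 0 ≤ π / 2 - ψ := by linarith [hψ.2]
    positivity
  calc (1 - b) / √(a + b) * ((√b)⁻¹ * log ((√c + √b * π) / √c))
      = ∫ ψ in -(π / 2)..π / 2, (1 - b) / √(a + b) * (√c + √b * (π / 2 - ψ))⁻¹ := by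
        rw [intervalIntegral.integral_const_mul,
          integral_comp_sub_left (fun s => (√c + √b * s)⁻¹), sub_self, sub_neg_eq_add,
          add_halves, integral_inv_add_mul hsc hsb pi_pos.le]
    _ ≤ ∫ ψ in -(π / 2)..π / 2, precessionIntegrand a b c ψ :=
        integral_mono_on (by linarith [pi_pos])
          (ContinuousOn.intervalIntegrable (by fun_prop (disch := assumption)))
          ((continuous_precessionIntegrand ha hb0.le hc).intervalIntegrable _ _)
          fun ψ hψ => le_precessionIntegrand ha hb0.le hb1 hc hψ.2

end

/-- The Dzhanibekov precession angle
`Δφ(c) = ∫_{−π/2}^{π/2} (1−b·cos²ψ)/√((a+b·cos²ψ)(c+b·cos²ψ)) dψ`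
tends to `+∞` as `c → 0⁺`. -/
theorem dzhanibekov_deltaPhi_tendsto_atTop (a b : ℝ)
    (ha : 0 < a) (hb0 : 0 < b) (hb1 : b < 1) :
    Tendsto
      (fun c : ℝ =>
        ∫ ψ in (-(π / 2))..(π / 2),
          (1 - b * Real.cos ψ ^ 2) /
            Real.sqrt ((a + b * Real.cos ψ ^ 2) * (c + b * Real.cos ψ ^ 2)))
      (nhdsWithin 0 (Set.Ioi 0)) atTop := by
  have hK : 0 < (1 - b) / √(a + b) := div_pos (sub_pos.2 hb1) (sqrt_pos.2 (by linarith))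
  have hlog : Tendsto (fun c => log ((√c + √b * π) / √c)) (𝓝[>] 0) atTop :=
    (tendsto_log_add_div_self_nhdsGT_zero (by positivity)).comp tendsto_sqrt_nhdsGT_zero
  refine tendsto_atTop_mono' _ ?_
    ((hlog.const_mul_atTop (inv_pos.2 (sqrt_pos.2 hb0))).const_mul_atTop hK)
  exact eventually_nhdsWithin_of_forall fun c hc =>
    log_le_integral_precessionIntegrand ha hb0 hb1.le hc
end

section
/- Let J > 0 and 0 < I_z < I_y < I_x be real constants, and set a = I_y/I_z − 1 and b = 1 − I_y/I_x. Let θ, ψ : ℝ → ℝ be differentiable functions satisfying Euler's equations θ'(t) = J(1/I_y − 1/I_x)·sin θ(t)·sin ψ(t)·cos ψ(t) and ψ'(t) = J(1/I_z − sin²ψ(t)/I_y − cos²ψ(t)/I_x)·cos θ(t) for all t. Then the function t ↦ a − sin²θ(t)·(a + b cos²ψ(t)) is constant on ℝ. -/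
open Real

/-! Writing `1/Iy − 1/Ix = b/Iy` and `1/Iz − sin²ψ/Iy − cos²ψ/Ix = (a + b cos²ψ)/Iy`, Euler's
equations become `θ' = k b sin θ sin ψ cos ψ`, `ψ' = k (a + b cos²ψ) cos θ` with `k = J/Iy`; along
this reduced system the derivative of `a − sin²θ (a + b cos²ψ)` cancels identically. -/

noncomputable def rigidBodyInvariant (a b θ ψ : ℝ) : ℝ :=
  a - sin θ ^ 2 * (a + b * cos ψ ^ 2)

theorem hasDerivAt_rigidBodyInvariant {a b θ' ψ' t : ℝ} {θ ψ : ℝ → ℝ}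
    (hθ : HasDerivAt θ θ' t) (hψ : HasDerivAt ψ ψ' t) :
    HasDerivAt (fun t => rigidBodyInvariant a b (θ t) (ψ t))
      (2 * sin (θ t) * (b * sin (θ t) * sin (ψ t) * cos (ψ t) * ψ'
        - cos (θ t) * (a + b * cos (ψ t) ^ 2) * θ')) t := by
  have hsin := (hθ.sin.fun_pow 2).fun_mul (((hψ.cos.fun_pow 2).const_mul b).const_add a)
  refine (hsin.const_sub a).congr_deriv ?_
  push_cast
  ring

theorem rigidBodyInvariant_eq_of_reduced_euler (k a b : ℝ) {θ ψ : ℝ → ℝ}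
    (hθ : Differentiable ℝ θ) (hψ : Differentiable ℝ ψ)
    (hθ' : ∀ t, deriv θ t = k * b * sin (θ t) * sin (ψ t) * cos (ψ t))
    (hψ' : ∀ t, deriv ψ t = k * (a + b * cos (ψ t) ^ 2) * cos (θ t)) (s t : ℝ) :
    rigidBodyInvariant a b (θ s) (ψ s) = rigidBodyInvariant a b (θ t) (ψ t) := by
  have hderiv : ∀ t, HasDerivAt (fun t => rigidBodyInvariant a b (θ t) (ψ t)) 0 t := by
    intro t
    refine (hasDerivAt_rigidBodyInvariant (hθ t).hasDerivAt (hψ t).hasDerivAt).congr_deriv ?_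
    rw [hθ', hψ']
    ring
  exact is_const_of_deriv_eq_zero (fun t => (hderiv t).differentiableAt)
    (fun t => (hderiv t).deriv) s t

theorem one_div_sub_one_div_eq_div {Ix Iy b : ℝ} (hy : Iy ≠ 0) (hb : b = 1 - Iy / Ix) :
    1 / Iy - 1 / Ix = b / Iy := by
  subst hb
  field_simp

theorem one_div_sub_sin_sq_div_sub_cos_sq_div_eq {Ix Iy Iz a b : ℝ} (hy : Iy ≠ 0)
    (ha : a = Iy / Iz - 1) (hb : b = 1 - Iy / Ix) (x : ℝ) :
    1 / Iz - sin x ^ 2 / Iy - cos x ^ 2 / Ix = (a + b * cos x ^ 2) / Iy := by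
  rw [sin_sq, ha, hb]
  field_simp
  ring

theorem euler_conserved_quantity_general (J Ix Iy Iz a b : ℝ)
    (hz : 0 < Iz) (hzy : Iz < Iy)
    (ha : a = Iy / Iz - 1) (hb : b = 1 - Iy / Ix)
    (θ ψ : ℝ → ℝ) (hθ : Differentiable ℝ θ) (hψ : Differentiable ℝ ψ)
    (hθ' : ∀ t, deriv θ t =
      J * (1 / Iy - 1 / Ix) * Real.sin (θ t) * Real.sin (ψ t) * Real.cos (ψ t))
    (hψ' : ∀ t, deriv ψ t =
      J * (1 / Iz - Real.sin (ψ t) ^ 2 / Iy - Real.cos (ψ t) ^ 2 / Ix) *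
        Real.cos (θ t)) :
    ∀ s t : ℝ,
      a - Real.sin (θ s) ^ 2 * (a + b * Real.cos (ψ s) ^ 2) =
        a - Real.sin (θ t) ^ 2 * (a + b * Real.cos (ψ t) ^ 2) := by
  have hy : Iy ≠ 0 := (hz.trans hzy).ne'
  refine rigidBodyInvariant_eq_of_reduced_euler (J / Iy) a b hθ hψ (fun t => ?_) (fun t => ?_)
  · rw [hθ', one_div_sub_one_div_eq_div hy hb]
    ring
  · rw [hψ', one_div_sub_sin_sq_div_sub_cos_sq_div_eq hy ha hb]
    ring

/-- Conservation law from Euler's equations: along any solution `(θ, ψ)` of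
Euler's equations for the free rigid body, the quantity
`a − sin²θ·(a + b·cos²ψ)` is constant. -/
theorem euler_conserved_quantity (J Ix Iy Iz a b : ℝ)
    (hJ : 0 < J) (hz : 0 < Iz) (hzy : Iz < Iy) (hyx : Iy < Ix)
    (ha : a = Iy / Iz - 1) (hb : b = 1 - Iy / Ix)
    (θ ψ : ℝ → ℝ) (hθ : Differentiable ℝ θ) (hψ : Differentiable ℝ ψ)
    (hθ' : ∀ t, deriv θ t =
      J * (1 / Iy - 1 / Ix) * Real.sin (θ t) * Real.sin (ψ t) * Real.cos (ψ t))
    (hψ' : ∀ t, deriv ψ t =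
      J * (1 / Iz - Real.sin (ψ t) ^ 2 / Iy - Real.cos (ψ t) ^ 2 / Ix) *
        Real.cos (θ t)) :
    ∀ s t : ℝ,
      a - Real.sin (θ s) ^ 2 * (a + b * Real.cos (ψ s) ^ 2) =
        a - Real.sin (θ t) ^ 2 * (a + b * Real.cos (ψ t) ^ 2) :=
  euler_conserved_quantity_general J Ix Iy Iz a b hz hzy ha hb θ ψ hθ hψ hθ' hψ'
end
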